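/- arXiv:1402.0482 — 3 statements merged into one kernel-verified Lean document; each statement's English description precedes it below -/
import Mathlib

section
/- In a free group F, if elements x, y, z satisfy x²y²z² = 1, then x, y, z pairwise commute. -/
set_option linter.unusedSectionVars false

namespace LyndonAux

open FreeGroup List

variable {α : Type*} [DecidableEq α]

/-- inverse of a letter -/
def iv (s : α × Bool) : α × Bool := (s.1, !s.2)

lemma iv_iv (s : α × Bool) : iv (iv s) = s := by cases s; simp [iv]

lemma iv_ne (s : α × Bool) : iv s ≠ s := by
  cases s with
  | mk a b => cases b <;> simp [iv]

lemma iv_injective : Function.Injective (iv (α := α)) :=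
  Function.Involutive.injective iv_iv

/-- non-cancelling pair of letters -/
def NC (s t : α × Bool) : Prop := t ≠ iv s

lemma nc_iff {s t : α × Bool} : NC s t ↔ s ≠ iv t := by
  constructor
  · intro h he; exact h (by rw [he, iv_iv])
  · intro h he; exact h (by rw [he, iv_iv])

lemma nc_symm {s t : α × Bool} (h : NC s t) : NC t s := nc_iff.mp h

/-- a reduced word -/
def Red' (w : List (α × Bool)) : Prop := List.Chain' NC w

lemma red'_nil : Red' ([] : List (α × Bool)) := List.isChain_nil

lemma red'_reduce (L : List (α × Bool)) : Red' (reduce L) := by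
  induction L with
  | nil => exact red'_nil
  | cons x L ih =>
    rw [reduce.cons]
    rcases h : reduce L with _ | ⟨hd, tl⟩
    · exact List.isChain_singleton x
    · rw [h] at ih
      by_cases hc : x.1 = hd.1 ∧ x.2 = !hd.2
      · simp only [hc, and_self, if_true]
        exact ih.tail
      · simp only [hc, if_false]
        refine List.isChain_cons_cons.2 ⟨?_, ih⟩
        intro he
        apply hc
        rw [he]
        exact ⟨rfl, by simp [iv]⟩

lemma reduce_eq_self_of_red' {L : List (α × Bool)} (h : Red' L) : reduce L = L := by
  induction L with
  | nil => rfl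
  | cons x L ih =>
    have ht : reduce L = L := ih h.tail
    rw [reduce.cons, ht]
    rcases L with _ | ⟨hd, tl⟩
    · rfl
    · have hnc : NC x hd := (List.isChain_cons_cons.1 h).1
      have : ¬(x.1 = hd.1 ∧ x.2 = !hd.2) := by
        intro hc
        apply hnc
        have : hd = iv x := by
          have h1 : hd.1 = x.1 := hc.1.symm
          have h2 : hd.2 = !x.2 := by rw [hc.2]; simp
          cases hd; cases x; simp_all [iv]
        -- need hd = iv x ; NC x hd means hd ≠ iv x
        exact this
      simp [this]

lemma toWord_red' (x : FreeGroup α) : Red' x.toWord := by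
  rw [← reduce_toWord]; exact red'_reduce _

lemma toWord_mk_red' {L : List (α × Bool)} (h : Red' L) : (mk L).toWord = L := by
  rw [toWord_mk, reduce_eq_self_of_red' h]

lemma invRev_cons (x : α × Bool) (L : List (α × Bool)) :
    invRev (x :: L) = invRev L ++ [iv x] := by
  simp [invRev, iv]

lemma invRev_append (L₁ L₂ : List (α × Bool)) :
    invRev (L₁ ++ L₂) = invRev L₂ ++ invRev L₁ := by
  simp [invRev]

lemma invRev_red' {L : List (α × Bool)} (h : Red' L) : Red' (invRev L) := by
  unfold Red' List.Chain' at *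
  unfold invRev
  rw [List.isChain_reverse, List.isChain_map]
  refine h.imp ?_
  intro a b hab
  show NC (iv b) (iv a)
  intro he
  rw [iv_iv] at he
  exact hab he.symm

lemma head?_invRev (L : List (α × Bool)) : (invRev L).head? = L.getLast?.map iv := by
  unfold invRev
  rw [List.head?_reverse, List.getLast?_map]
  rfl

lemma getLast?_invRev (L : List (α × Bool)) : (invRev L).getLast? = L.head?.map iv := by
  cases L with
  | nil => rfl
  | cons x L => rw [invRev_cons, List.getLast?_concat]; rfl

lemma red'_append {A B : List (α × Bool)} (hA : Red' A) (hB : Red' B)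
    (h : ∀ a ∈ A.getLast?, ∀ b ∈ B.head?, NC a b) : Red' (A ++ B) :=
  List.isChain_append.2 ⟨hA, hB, h⟩

lemma junction_of_red' {A B : List (α × Bool)} (h : Red' (A ++ B)) :
    ∀ a ∈ A.getLast?, ∀ b ∈ B.head?, NC a b :=
  (List.isChain_append.1 h).2.2

lemma red'_left {A B : List (α × Bool)} (h : Red' (A ++ B)) : Red' A :=
  (List.isChain_append.1 h).1

lemma red'_right {A B : List (α × Bool)} (h : Red' (A ++ B)) : Red' B :=
  (List.isChain_append.1 h).2.1

end LyndonAux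
namespace LyndonAux
open FreeGroup List
set_option linter.unusedSectionVars false
variable {α : Type*} [DecidableEq α]

lemma mul_core : ∀ (n : ℕ) (X Y : List (α × Bool)), X.length ≤ n → Red' X → Red' Y →
    ∃ X₁ Y₁ T, X = X₁ ++ invRev T ∧ Y = T ++ Y₁ ∧ Red' (X₁ ++ Y₁) ∧
      reduce (X ++ Y) = X₁ ++ Y₁ := by
  intro n
  induction n with
  | zero =>
    intro X Y hl hX hY
    have hXnil : X = [] := List.eq_nil_of_length_eq_zero (Nat.le_zero.1 hl)
    subst hXnil
    exact ⟨[], Y, [], by simp [invRev_empty], by simp, by simpa using hY,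
      by simpa using reduce_eq_self_of_red' hY⟩
  | succ n ih =>
    intro X Y hl hX hY
    rcases List.eq_nil_or_concat X with rfl | ⟨X', a, rfl⟩
    · exact ⟨[], Y, [], by simp [invRev_empty], by simp, by simpa using hY,
        by simpa using reduce_eq_self_of_red' hY⟩
    · rw [List.concat_eq_append] at *
      rcases Y with _ | ⟨b, Y'⟩
      · refine ⟨X' ++ [a], [], [], by simp [invRev_empty], by simp, by simpa using hX, ?_⟩
        simpa using reduce_eq_self_of_red' hX
      · by_cases hb : b = iv a
        · -- cancellation
          have hstep : Red.Step ((X' ++ [a]) ++ b :: Y') (X' ++ Y') := by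
            subst hb
            have : (X' ++ [a]) ++ iv a :: Y' = X' ++ (a.1, a.2) :: (a.1, !a.2) :: Y' := by
              simp [iv]
            rw [this]
            exact Red.Step.not
          have hX' : Red' X' := red'_left hX
          have hY' : Red' Y' := hY.tail
          have hlen : X'.length ≤ n := by
            have := hl
            simp only [List.length_append, List.length_singleton] at this
            omega
          obtain ⟨X₁, Y₁, T, e1, e2, hred, hr⟩ := ih X' Y' hlen hX' hY'
          refine ⟨X₁, Y₁, b :: T, ?_, ?_, hred, ?_⟩
          · rw [invRev_cons, hb, iv_iv, e1, List.append_assoc]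
          · rw [e2]; rfl
          · rw [reduce.Step.eq hstep, hr]
        · -- no cancellation
          refine ⟨X' ++ [a], b :: Y', [], by simp [invRev_empty], by simp, ?_, ?_⟩
          · refine red'_append hX hY ?_
            intro x hx y hy
            rw [List.getLast?_concat] at hx
            simp only [List.head?_cons, Option.mem_def, Option.some.injEq] at hx hy
            subst hx; subst hy
            exact hb
          · apply reduce_eq_self_of_red'
            refine red'_append hX hY ?_
            intro x hx y hy
            rw [List.getLast?_concat] at hx
            simp only [List.head?_cons, Option.mem_def, Option.some.injEq] at hx hy
            subst hx; subst hy
            exact hb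

lemma mul_decomp (x y : FreeGroup α) :
    ∃ X₁ Y₁ T, x.toWord = X₁ ++ invRev T ∧ y.toWord = T ++ Y₁ ∧ Red' (X₁ ++ Y₁) ∧
      (x * y).toWord = X₁ ++ Y₁ := by
  obtain ⟨X₁, Y₁, T, e1, e2, hred, hr⟩ :=
    mul_core x.toWord.length x.toWord y.toWord le_rfl (toWord_red' x) (toWord_red' y)
  refine ⟨X₁, Y₁, T, e1, e2, hred, ?_⟩
  have hxy : x * y = mk (x.toWord ++ y.toWord) := by
    rw [← mul_mk, mk_toWord, mk_toWord]
  rw [hxy, toWord_mk, hr]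

lemma cyc_core : ∀ (n : ℕ) (X : List (α × Bool)), X.length ≤ n → Red' X → X ≠ [] →
    ∃ u γ, X = u ++ γ ++ invRev u ∧ γ ≠ [] ∧ Red' (γ ++ γ) := by
  intro n
  induction n with
  | zero => intro X hl _ hne; exact absurd (List.eq_nil_of_length_eq_zero (Nat.le_zero.1 hl)) hne
  | succ n ih =>
    intro X hl hX hne
    rcases X with _ | ⟨x, X0⟩
    · exact absurd rfl hne
    · rcases List.eq_nil_or_concat X0 with rfl | ⟨mid, a, rfl⟩
      · -- single letter
        refine ⟨[], [x], by simp, by simp, ?_⟩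
        exact List.isChain_cons_cons.2 ⟨fun h => iv_ne x h.symm, List.isChain_singleton x⟩
      · rw [List.concat_eq_append] at *
        by_cases hxa : NC a x
        · -- cyclically reduced already
          refine ⟨[], x :: (mid ++ [a]), by simp, by simp, ?_⟩
          refine red'_append hX hX ?_
          intro p hp q hq
          have hplast : (x :: (mid ++ [a])).getLast? = some a := by
            rw [← List.cons_append, List.getLast?_concat]
          rw [hplast] at hp
          simp only [List.head?_cons, Option.mem_def, Option.some.injEq] at hp hq
          subst hp; subst hq
          exact hxa
        · -- x = iv a
          have hxe : x = iv a := by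
            by_contra hne2
            exact hxa hne2
          have hmid : Red' mid := by
            have h1 : Red' (mid ++ [a]) := hX.tail
            exact red'_left h1
          rcases mid with _ | ⟨m0, midt⟩
          · -- X = [iv a, a] : not reduced, contradiction
            exfalso
            have : NC x a := (List.isChain_cons_cons.1 hX).1
            exact this (by rw [hxe, iv_iv])
          · have hlen : (m0 :: midt).length ≤ n := by
              have := hl
              simp only [List.length_cons, List.length_append, List.length_singleton] at this ⊢
              omega
            obtain ⟨u', γ, e, hγ, hred⟩ := ih (m0 :: midt) hlen hmid (by simp)
            refine ⟨x :: u', γ, ?_, hγ, hred⟩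
            rw [invRev_cons, hxe, iv_iv]
            rw [← List.cons_append, e]
            simp [List.append_assoc]

end LyndonAux
namespace LyndonAux
open FreeGroup List
set_option linter.unusedSectionVars false
variable {α : Type*} [DecidableEq α]

lemma head?_append_left {A B : List (α × Bool)} (h : A ≠ []) :
    (A ++ B).head? = A.head? := by
  cases A with
  | nil => exact absurd rfl h
  | cons a A => rfl

lemma getLast?_append_right {A B : List (α × Bool)} (h : B ≠ []) :
    (A ++ B).getLast? = B.getLast? := List.getLast?_append_of_ne_nil _ h

lemma mk_append_red' {L : List (α × Bool)} (h : Red' L) :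
    (mk L).toWord = L := toWord_mk_red' h

/-- cyclic decomposition of a square -/
lemma sq_toWord (x : FreeGroup α) (hx : x ≠ 1) :
    ∃ u γ, x.toWord = u ++ γ ++ invRev u ∧ γ ≠ [] ∧ Red' (γ ++ γ) ∧
      (x * x).toWord = u ++ (γ ++ γ) ++ invRev u := by
  have hne : x.toWord ≠ [] := fun h => hx (toWord_eq_nil_iff.1 h)
  obtain ⟨u, γ, e, hγ, hγγ⟩ := cyc_core x.toWord.length x.toWord le_rfl (toWord_red' x) hne
  refine ⟨u, γ, e, hγ, hγγ, ?_⟩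
  have hXred : Red' (u ++ γ ++ invRev u) := e ▸ toWord_red' x
  have hx' : x = mk (u ++ γ ++ invRev u) := by
    conv_lhs => rw [← mk_toWord (x := x), e]
  have hx2 : x = mk u * mk γ * (mk u)⁻¹ := by
    rw [inv_mk, mul_mk, mul_mk]; exact hx'
  have hxx : x * x = mk (u ++ (γ ++ γ) ++ invRev u) := by
    have h5 : x * x = mk u * (mk γ * mk γ) * (mk u)⁻¹ := by rw [hx2]; group
    rw [h5, inv_mk]
    simp only [mul_mk, List.append_assoc]
  -- reducedness of the new word
  have hjuγ : ∀ a ∈ u.getLast?, ∀ b ∈ γ.head?, NC a b := by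
    have := junction_of_red' (A := u) (B := γ ++ invRev u) (by
      rw [← List.append_assoc]; exact hXred)
    intro a ha b hb
    exact this a ha b (by rw [head?_append_left hγ]; exact hb)
  have hjγu : ∀ a ∈ γ.getLast?, ∀ b ∈ (invRev u).head?, NC a b := by
    have := junction_of_red' (A := u ++ γ) (B := invRev u) hXred
    intro a ha b hb
    refine this a ?_ b hb
    rw [getLast?_append_right hγ]; exact ha
  have hu : Red' u := red'_left (red'_left hXred)
  have hiu : Red' (invRev u) := red'_right hXred
  have hγred : Red' γ := red'_left hγγ
  have hnew : Red' (u ++ (γ ++ γ) ++ invRev u) := by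
    refine red'_append (red'_append hu hγγ ?_) hiu ?_
    · intro a ha b hb
      rw [head?_append_left hγ] at hb
      exact hjuγ a ha b hb
    · intro a ha b hb
      rw [getLast?_append_right (show γ ++ γ ≠ [] by simp [hγ]),
        getLast?_append_right hγ] at ha
      exact hjγu a ha b hb
  rw [hxx, mk_append_red' hnew]

lemma sq_ne_one (x : FreeGroup α) (hx : x ≠ 1) : x * x ≠ 1 := by
  obtain ⟨u, γ, _, hγ, _, hw⟩ := sq_toWord x hx
  intro h
  rw [h, toWord_one] at hw
  have h0 := hw.symm
  simp only [List.append_eq_nil_iff] at h0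
  exact hγ h0.1.2.1

/-- a reduced word equal to its formal inverse is empty -/
lemma collapse : ∀ (n : ℕ) (B : List (α × Bool)), B.length ≤ n → Red' B →
    B = invRev B → B = [] := by
  intro n
  induction n with
  | zero => intro B hl _ _; exact List.eq_nil_of_length_eq_zero (Nat.le_zero.1 hl)
  | succ n ih =>
    intro B hl hB he
    rcases B with _ | ⟨b, B'⟩
    · rfl
    · exfalso
      rcases List.eq_nil_or_concat B' with rfl | ⟨mid, c, rfl⟩
      · -- [b] = [iv b]
        rw [invRev_cons, invRev_empty] at he
        simp at he
        exact iv_ne b he.symm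
      · rw [List.concat_eq_append] at *
        -- b :: (mid ++ [c]) = invRev (b :: (mid ++ [c]))
        have he2 : b :: (mid ++ [c]) = (iv c :: invRev mid) ++ [iv b] := by
          conv_lhs => rw [he]
          rw [invRev_cons, invRev_append]
          simp [invRev_cons, invRev_empty, List.append_assoc]
        have hb : b = iv c := by
          have := congrArg List.head? he2
          simpa using this
        have hmid : mid = invRev mid := by
          have h3 : b :: (mid ++ [c]) = (b :: invRev mid) ++ [c] := by
            rw [he2, hb, iv_iv]
          have h4 : mid ++ [c] = invRev mid ++ [c] := by
            rw [List.cons_append] at h3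
            simpa using h3
          exact (List.append_inj h4 (by simp [invRev_length])).1
        have hmidred : Red' mid := red'_left (hB.tail)
        have hmidlen : mid.length ≤ n := by
          have := hl; simp at this; omega
        have := ih mid hmidlen hmidred hmid
        subst this
        -- B = [b, c] with b = iv c, contradicting reducedness
        have hnc : NC b c := (List.isChain_cons_cons.1 hB).1
        apply hnc
        rw [hb, iv_iv]

lemma len_inv (x : FreeGroup α) : (x⁻¹).toWord.length = x.toWord.length := by
  rw [toWord_inv, invRev_length]

lemma len_mk_le (L : List (α × Bool)) : (mk L).toWord.length ≤ L.length := by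
  rw [toWord_mk]
  exact Red.length_le reduce.red

lemma toWord_mk_of_length {L : List (α × Bool)} (h : (mk L).toWord.length = L.length) :
    (mk L).toWord = L := by
  rw [toWord_mk] at *
  exact (Red.sublist reduce.red).eq_of_length h

end LyndonAux
namespace LyndonAux
open FreeGroup List
set_option linter.unusedSectionVars false
variable {α : Type*} [DecidableEq α]

lemma final_branch (u v s : FreeGroup α) (hu : u ≠ 1) (hv : v ≠ 1)
    (h1 : Red' (u.toWord ++ v.toWord))
    (h2 : Red' (invRev u.toWord ++ invRev v.toWord))
    (h3 : Red' (invRev u.toWord ++ v.toWord))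
    (hL1 : u.toWord.length ≤ (u * v⁻¹).toWord.length)
    (hL2 : v.toWord.length ≤ (u * v⁻¹).toWord.length)
    (hsq : u * v * u⁻¹ * v⁻¹ = s * s) : False := by
  obtain ⟨B, Y₁, T, eU, eV', hBY, hUV⟩ := mul_decomp u v⁻¹
  set f := invRev T with hf
  set C := invRev Y₁ with hC
  have eV : v.toWord = C ++ f := by
    have hvv : v.toWord = invRev ((v⁻¹).toWord) := by rw [toWord_inv, invRev_invRev]
    rw [hvv, eV', invRev_append]
  have hY₁ : Y₁ = invRev C := by rw [hC, invRev_invRev]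
  -- lengths
  have lU : u.toWord.length = B.length + T.length := by
    rw [eU]; simp [hf, invRev_length]
  have lV : v.toWord.length = C.length + T.length := by
    rw [eV]; simp [hf, hC, invRev_length]
  have lUV : (u * v⁻¹).toWord.length = B.length + Y₁.length := by rw [hUV]; simp
  have hCY : C.length = Y₁.length := by simp [hC, invRev_length]
  have hTB : T.length ≤ B.length := by omega
  have hBne : B ≠ [] := by
    intro h
    apply hu
    apply toWord_eq_nil_iff.1
    have : B.length = 0 := by rw [h]; rfl
    apply List.eq_nil_of_length_eq_zero
    omega
  have hTC : T.length ≤ C.length := by omega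
  have hCne : C ≠ [] := by
    intro h
    apply hv
    apply toWord_eq_nil_iff.1
    have : C.length = 0 := by rw [h]; rfl
    apply List.eq_nil_of_length_eq_zero
    omega
  -- basic pieces
  have huw : Red' u.toWord := toWord_red' u
  have hvw : Red' v.toWord := toWord_red' v
  have hBred : Red' B := red'_left (eU ▸ huw)
  have hCred : Red' C := red'_left (eV ▸ hvw)
  set b0 := B.head hBne with hb0
  set c0 := C.head hCne with hc0
  have hBh : B.head? = some b0 := List.head?_eq_head hBne
  have hCh : C.head? = some c0 := List.head?_eq_head hCne
  have hUh : u.toWord.head? = some b0 := by rw [eU, head?_append_left hBne, hBh]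
  have hVh : v.toWord.head? = some c0 := by rw [eV, head?_append_left hCne, hCh]
  -- the candidate reduced word of the commutator
  set t := u.toWord ++ (C ++ (invRev B ++ invRev v.toWord)) with ht
  have hiBne : invRev B ≠ [] := by
    intro h
    have := congrArg List.length h
    rw [invRev_length] at this
    exact hBne (List.eq_nil_of_length_eq_zero this)
  -- junction c: invRev B → invRev v.toWord
  have Jc : Red' (invRev B ++ invRev v.toWord) := by
    refine red'_append (invRev_red' hBred) (invRev_red' hvw) ?_
    intro a ha b hb
    have h2j := junction_of_red' h2
    refine h2j a ?_ b hb
    rw [getLast?_invRev] at ha ⊢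
    rw [hUh]
    rw [hBh] at ha
    exact ha
  -- junction b : C → invRev B
  have Jb : Red' (C ++ (invRev B ++ invRev v.toWord)) := by
    refine red'_append hCred Jc ?_
    intro a ha b hb
    rw [head?_append_left hiBne, head?_invRev] at hb
    -- b = iv (B.getLast)
    have hBl : B.getLast? = some (B.getLast hBne) := List.getLast?_eq_getLast hBne
    rw [hBl] at hb
    simp only [Option.map_some, Option.mem_def, Option.some.injEq] at hb
    subst hb
    -- from hBY junction : NC (B.getLast) (iv (C.getLast))
    have hbj := junction_of_red' hBY
    have hCl : C.getLast? = some (C.getLast hCne) := List.getLast?_eq_getLast hCne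
    have hy1 : Y₁.head? = some (iv (C.getLast hCne)) := by
      rw [hY₁, head?_invRev, hCl]; rfl
    have hnc : NC (B.getLast hBne) (iv (C.getLast hCne)) :=
      hbj _ (by rw [hBl]; rfl) _ (by rw [hy1]; rfl)
    -- a = C.getLast
    rw [hCl] at ha
    simp only [Option.mem_def, Option.some.injEq] at ha
    subst ha
    -- goal : NC (C.getLast) (iv (B.getLast)), i.e. iv B.getLast ≠ iv C.getLast
    intro hcon
    exact hnc (iv_injective hcon.symm ▸ rfl)
  -- junction a : u.toWord → rest
  have htred : Red' t := by
    refine red'_append huw Jb ?_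
    intro a ha b hb
    rw [head?_append_left hCne, hCh] at hb
    have h1j := junction_of_red' h1
    simp only [Option.mem_def, Option.some.injEq] at hb
    subst hb
    exact h1j a ha c0 (by rw [hVh]; rfl)
  -- mk t equals the commutator
  have e_u : u = mk (B ++ f) := by conv_lhs => rw [← mk_toWord (x := u), eU]
  have e_v : v = mk (C ++ f) := by conv_lhs => rw [← mk_toWord (x := v), eV]
  have hmkt : u * (mk C * ((mk B)⁻¹ * v⁻¹)) = mk t := by
    have hv' : v⁻¹ = mk (invRev v.toWord) := by rw [← toWord_inv, mk_toWord]
    conv_lhs => rw [← mk_toWord (x := u)]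
    rw [inv_mk, hv']
    simp only [mul_mk]
    rfl
  have hcomm : u * v * u⁻¹ * v⁻¹ = mk t := by
    rw [← hmkt, e_u, e_v]
    simp only [← mul_mk]
    group
  have hwt : (u * v * u⁻¹ * v⁻¹).toWord = t := by
    rw [hcomm, toWord_mk_red' htred]
  have htne : t ≠ [] := by
    rw [ht]
    intro h
    rw [List.append_eq_nil_iff] at h
    exact hBne (by
      have := h.1
      rw [eU, List.append_eq_nil_iff] at this
      exact this.1)
  have hsne : s ≠ 1 := by
    intro h
    rw [h, one_mul] at hsq
    rw [hsq, toWord_one] at hwt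
    exact htne hwt.symm
  obtain ⟨w, γ, _, hγ, _, hsw⟩ := sq_toWord s hsne
  rw [← hsq, hwt] at hsw
  -- show w = []
  have hw : w = [] := by
    rcases w with _ | ⟨w0, w'⟩
    · rfl
    · exfalso
      have hiw : invRev (w0 :: w') ≠ [] := by
        intro h
        have := congrArg List.length h
        rw [invRev_length] at this
        simp at this
      -- head of t
      have hth : t.head? = some b0 := by
        rw [ht, head?_append_left (by rw [eU]; simp [hBne]), hUh]
      have hth2 : t.head? = some w0 := by
        rw [hsw, head?_append_left, head?_append_left] <;> simp
      have hww : w0 = b0 := by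
        rw [hth] at hth2
        injection hth2 with h'
        exact h'.symm
      -- last of t
      have htl : t.getLast? = some (iv c0) := by
        rw [ht, getLast?_append_right, getLast?_append_right, getLast?_append_right]
        · rw [getLast?_invRev, hVh]; rfl
        · intro h
          have := congrArg List.length h
          rw [invRev_length] at this
          exact hv (toWord_eq_nil_iff.1 (List.eq_nil_of_length_eq_zero this))
        · intro h; rw [List.append_eq_nil_iff] at h
          have := congrArg List.length h.2
          rw [invRev_length] at this
          exact hv (toWord_eq_nil_iff.1 (List.eq_nil_of_length_eq_zero this))
        · intro h; rw [List.append_eq_nil_iff, List.append_eq_nil_iff] at h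
          have := congrArg List.length h.2.2
          rw [invRev_length] at this
          exact hv (toWord_eq_nil_iff.1 (List.eq_nil_of_length_eq_zero this))
      have htl2 : t.getLast? = some (iv w0) := by
        rw [hsw, getLast?_append_right hiw, getLast?_invRev]
        simp
      have hcc : iv c0 = iv w0 := by rw [htl] at htl2; injection htl2
      have hcb : c0 = b0 := by
        have := iv_injective hcc
        rw [this, hww]
      -- contradiction with h3
      have h3j := junction_of_red' h3
      have hnc : NC (iv b0) c0 := by
        refine h3j _ ?_ _ (by rw [hVh]; rfl)
        rw [getLast?_invRev, hUh]; rfl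
      exact hnc (by rw [hcb, iv_iv])
  subst hw
  rw [invRev_empty, List.nil_append, List.append_nil] at hsw
  -- t = γ ++ γ ; split in halves
  have hsplit : (u.toWord ++ C) ++ (invRev B ++ invRev v.toWord) = γ ++ γ := by
    rw [← hsw, ht]; simp [List.append_assoc]
  have hlenhalf : (u.toWord ++ C).length = γ.length := by
    have htot := congrArg List.length hsplit
    simp only [List.length_append, invRev_length] at htot
    simp only [List.length_append]
    omega
  obtain ⟨hγ1, hγ2⟩ := List.append_inj hsplit hlenhalf
  -- u.toWord ++ C = invRev B ++ invRev v.toWord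
  have hkey : B ++ (f ++ C) = invRev B ++ invRev v.toWord := by
    rw [← List.append_assoc, ← eU, hγ1, hγ2]
  have hBB : B = invRev B :=
    (List.append_inj hkey (by rw [invRev_length])).1
  exact hBne (collapse B.length B le_rfl hBred hBB)

end LyndonAux
namespace LyndonAux
open FreeGroup List
set_option linter.unusedSectionVars false

section CT
variable {G : Type*} [Group G]

lemma ct_conj {g x y : G} (h : Commute (g⁻¹*x*g) (g⁻¹*y*g)) : Commute x y := by
  rw [commute_iff_eq] at h ⊢
  calc x*y = g*((g⁻¹*x*g)*(g⁻¹*y*g))*g⁻¹ := by group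
  _ = g*((g⁻¹*y*g)*(g⁻¹*x*g))*g⁻¹ := by rw [h]
  _ = y*x := by group

lemma ct1 {x y : G} (h : Commute y (x⁻¹*y)) : Commute x y := by
  rw [commute_iff_eq] at h ⊢
  have h1 : y * x⁻¹ * y = x⁻¹ * y * y := by
    calc y*x⁻¹*y = y*(x⁻¹*y) := by rw [mul_assoc]
    _ = (x⁻¹*y)*y := h
  have h2 : y * x⁻¹ = x⁻¹ * y := mul_right_cancel h1
  calc x*y = x*(y*x⁻¹)*x := by group
  _ = x*(x⁻¹*y)*x := by rw [h2]
  _ = y*x := by group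

lemma ct2 {x y : G} (h : Commute x (x⁻¹*y)) : Commute x y := by
  rw [commute_iff_eq] at h ⊢
  have h1 : y = x⁻¹*y*x := by
    calc y = x*(x⁻¹*y) := by group
    _ = x⁻¹*y*x := h
  calc x*y = x*(x⁻¹*y*x) := by rw [← h1]
  _ = y*x := by group

lemma ct4 {x y : G} (h : Commute (x*y⁻¹) y) : Commute x y := by
  rw [commute_iff_eq] at h ⊢
  have h1 : x = y*x*y⁻¹ := by
    calc x = x*y⁻¹*y := by group
    _ = y*(x*y⁻¹) := h
    _ = y*x*y⁻¹ := by group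
  calc x*y = (y*x*y⁻¹)*y := by rw [← h1]
  _ = y*x := by group

lemma ct5 {x y : G} (h : Commute x (y*x⁻¹)) : Commute x y := by
  rw [commute_iff_eq] at h ⊢
  have h1 : y = x*y*x⁻¹ := by
    calc y = (y*x⁻¹)*x := by group
    _ = x*(y*x⁻¹) := h.symm
    _ = x*y*x⁻¹ := by group
  conv_rhs => rw [h1]
  group

lemma ct6 {x y : G} (h : Commute x y⁻¹) : Commute x y := by
  simpa using h.inv_right

lemma ct7 {x y : G} (h : Commute x⁻¹ y) : Commute x y := by
  simpa using h.inv_left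

end CT

variable {α : Type*} [DecidableEq α]

lemma run (n : ℕ)
    (IH : ∀ m, m < n → ∀ (a b σ : FreeGroup α), a.toWord.length + b.toWord.length = m →
      a * b * a⁻¹ * b⁻¹ = σ * σ → Commute a b)
    (x y σ : FreeGroup α) (hn : x.toWord.length + y.toWord.length = n)
    (hx : x ≠ 1) (hy : y ≠ 1) (hsq : x * y * x⁻¹ * y⁻¹ = σ * σ) :
    Commute x y ∨ Red' (invRev x.toWord ++ y.toWord) := by
  by_cases hk1 : (x⁻¹ * y).toWord.length < x.toWord.length
  · left
    have hid : y * (x⁻¹*y) * y⁻¹ * (x⁻¹*y)⁻¹ = (x⁻¹*σ*x) * (x⁻¹*σ*x) := by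
      have h0 : y * (x⁻¹*y) * y⁻¹ * (x⁻¹*y)⁻¹ = x⁻¹*(x*y*x⁻¹*y⁻¹)*x := by group
      rw [h0, hsq]; group
    have hlt : y.toWord.length + (x⁻¹*y).toWord.length < n := by omega
    exact ct1 (IH _ hlt y (x⁻¹*y) _ rfl hid)
  by_cases hk2 : (x⁻¹ * y).toWord.length < y.toWord.length
  · left
    have hid : x * (x⁻¹*y) * x⁻¹ * (x⁻¹*y)⁻¹ = (x⁻¹*σ*x) * (x⁻¹*σ*x) := by
      have h0 : x * (x⁻¹*y) * x⁻¹ * (x⁻¹*y)⁻¹ = x⁻¹*(x*y*x⁻¹*y⁻¹)*x := by group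
      rw [h0, hsq]; group
    have hlt : x.toWord.length + (x⁻¹*y).toWord.length < n := by omega
    exact ct2 (IH _ hlt x (x⁻¹*y) _ rfl hid)
  push_neg at hk1 hk2
  obtain ⟨X₁, Y₂, M, e1, e2, hXY, he⟩ := mul_decomp x⁻¹ y
  have ex : x.toWord = M ++ invRev X₁ := by
    have h0 : x.toWord = invRev ((x⁻¹).toWord) := by rw [toWord_inv, invRev_invRev]
    rw [h0, e1, invRev_append, invRev_invRev]
  rcases Classical.em (M = []) with hM | hM
  · right
    subst hM
    rw [invRev_empty, List.append_nil] at e1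
    rw [List.nil_append] at e2
    rw [← toWord_inv, e1, e2]
    exact hXY
  -- KILL step
  have lx : x.toWord.length = M.length + X₁.length := by
    rw [ex]; simp [invRev_length]
  have ly : y.toWord.length = M.length + Y₂.length := by rw [e2]; simp
  have lxy : (x⁻¹*y).toWord.length = X₁.length + Y₂.length := by rw [he]; simp
  have hX₂ne : invRev X₁ ≠ [] := by
    intro h
    have h0 : X₁.length = 0 := by
      have := congrArg List.length h
      rw [invRev_length] at this
      exact this
    have hM0 : M.length = 0 := by omega
    exact hM (List.eq_nil_of_length_eq_zero hM0)
  have hX₁ne : X₁ ≠ [] := by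
    intro h; exact hX₂ne (by rw [h, invRev_empty])
  have hY₂ne : Y₂ ≠ [] := by
    intro h
    have h0 : Y₂.length = 0 := by rw [h]; rfl
    have hM0 : M.length = 0 := by omega
    exact hM (List.eq_nil_of_length_eq_zero hM0)
  have hxM : x = mk M * mk (invRev X₁) := by
    conv_lhs => rw [← mk_toWord (x := x), ex]
    rw [mul_mk]
  have hyM : y = mk M * mk Y₂ := by
    conv_lhs => rw [← mk_toWord (x := y), e2]
    rw [mul_mk]
  have e1' : mk (invRev X₁ ++ M) = (mk M)⁻¹ * x * mk M := by
    rw [hxM, ← mul_mk]; group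
  have e2' : mk (Y₂ ++ M) = (mk M)⁻¹ * y * mk M := by
    rw [hyM, ← mul_mk]; group
  have hsq' : (mk (invRev X₁ ++ M)) * (mk (Y₂ ++ M)) * (mk (invRev X₁ ++ M))⁻¹ *
      (mk (Y₂ ++ M))⁻¹ = ((mk M)⁻¹*σ*(mk M)) * ((mk M)⁻¹*σ*(mk M)) := by
    rw [e1', e2']
    have h0 : (mk M)⁻¹*x*mk M * ((mk M)⁻¹*y*mk M) * ((mk M)⁻¹*x*mk M)⁻¹ *
        ((mk M)⁻¹*y*mk M)⁻¹ = (mk M)⁻¹*(x*y*x⁻¹*y⁻¹)*mk M := by group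
    rw [h0, hsq]; group
  have hlex : (mk (invRev X₁ ++ M)).toWord.length ≤ x.toWord.length := by
    calc (mk (invRev X₁ ++ M)).toWord.length ≤ (invRev X₁ ++ M).length := len_mk_le _
    _ = x.toWord.length := by
        rw [lx, List.length_append, invRev_length]; omega
  have hley : (mk (Y₂ ++ M)).toWord.length ≤ y.toWord.length := by
    calc (mk (Y₂ ++ M)).toWord.length ≤ (Y₂ ++ M).length := len_mk_le _
    _ = y.toWord.length := by rw [ly, List.length_append]; omega
  by_cases hdrop : (mk (invRev X₁ ++ M)).toWord.length + (mk (Y₂ ++ M)).toWord.length < n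
  · left
    have hcm := IH _ hdrop (mk (invRev X₁ ++ M)) (mk (Y₂ ++ M)) _ rfl hsq'
    rw [e1', e2'] at hcm
    exact ct_conj hcm
  push_neg at hdrop
  have hxl : (mk (invRev X₁ ++ M)).toWord.length = (invRev X₁ ++ M).length := by
    have h1 := len_mk_le (invRev X₁ ++ M)
    have h2 := len_mk_le (Y₂ ++ M)
    have h3 : (invRev X₁ ++ M).length = x.toWord.length := by
      rw [lx, List.length_append, invRev_length]; omega
    have h4 : (Y₂ ++ M).length = y.toWord.length := by
      rw [ly, List.length_append]; omega
    omega
  have hyl : (mk (Y₂ ++ M)).toWord.length = (Y₂ ++ M).length := by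
    have h1 := len_mk_le (invRev X₁ ++ M)
    have h2 := len_mk_le (Y₂ ++ M)
    have h3 : (invRev X₁ ++ M).length = x.toWord.length := by
      rw [lx, List.length_append, invRev_length]; omega
    have h4 : (Y₂ ++ M).length = y.toWord.length := by
      rw [ly, List.length_append]; omega
    omega
  have hwx' : (mk (invRev X₁ ++ M)).toWord = invRev X₁ ++ M := toWord_mk_of_length hxl
  have hwy' : (mk (Y₂ ++ M)).toWord = Y₂ ++ M := toWord_mk_of_length hyl
  -- junction data from x.toWord = M ++ invRev X₁, y.toWord = M ++ Y₂, hXY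
  have hxred : Red' (M ++ invRev X₁) := ex ▸ toWord_red' x
  have hyred : Red' (M ++ Y₂) := e2 ▸ toWord_red' y
  set x' := mk (invRev X₁ ++ M) with hx'def
  set y' := mk (Y₂ ++ M) with hy'def
  have hx'1 : x' ≠ 1 := by
    intro h
    rw [h, toWord_one] at hwx'
    exact hX₂ne (List.append_eq_nil_iff.1 hwx'.symm).1
  have hy'1 : y' ≠ 1 := by
    intro h
    rw [h, toWord_one] at hwy'
    exact hY₂ne (List.append_eq_nil_iff.1 hwy'.symm).1
  -- heads and lasts
  have hMne : M ≠ [] := hM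
  have hMl : M.getLast? = some (M.getLast hMne) := List.getLast?_eq_getLast hMne
  have hX2h : (invRev X₁).head? = some ((invRev X₁).head hX₂ne) := List.head?_eq_head hX₂ne
  have hY2h : Y₂.head? = some (Y₂.head hY₂ne) := List.head?_eq_head hY₂ne
  -- h1 for (x', y')
  have H1 : Red' (x'.toWord ++ y'.toWord) := by
    rw [hwx', hwy']
    refine red'_append (hwx' ▸ toWord_red' x') (hwy' ▸ toWord_red' y') ?_
    intro a ha b hb
    rw [getLast?_append_right hMne] at ha
    rw [head?_append_left hY₂ne] at hb
    exact junction_of_red' hyred a ha b hb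
  -- h3 for (x', y')
  have H3 : Red' (invRev x'.toWord ++ y'.toWord) := by
    rw [hwx', hwy']
    refine red'_append (invRev_red' (hwx' ▸ toWord_red' x')) (hwy' ▸ toWord_red' y') ?_
    intro a ha b hb
    rw [getLast?_invRev, head?_append_left hX₂ne] at ha
    rw [head?_append_left hY₂ne] at hb
    -- a = iv (head X₂) ; from hXY junction : NC (getLast X₁) b where getLast X₁ = iv (head X₂)
    have hXl : X₁.getLast? = some (iv ((invRev X₁).head hX₂ne)) := by
      have : X₁.getLast? = (invRev (invRev X₁)).getLast? := by rw [invRev_invRev]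
      rw [this, getLast?_invRev, hX2h]; rfl
    have := junction_of_red' hXY _ (by rw [hXl]; rfl) b hb
    rw [hX2h] at ha
    simp only [Option.map_some, Option.mem_def, Option.some.injEq] at ha
    subst ha
    exact this
  -- h2 for (x', y')
  have H2 : Red' (invRev x'.toWord ++ invRev y'.toWord) := by
    rw [hwx', hwy']
    refine red'_append (invRev_red' (hwx' ▸ toWord_red' x'))
      (invRev_red' (hwy' ▸ toWord_red' y')) ?_
    intro a ha b hb
    rw [getLast?_invRev, head?_append_left hX₂ne, hX2h] at ha
    rw [head?_invRev, getLast?_append_right hMne, hMl] at hb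
    simp only [Option.map_some, Option.mem_def, Option.some.injEq] at ha hb
    subst ha; subst hb
    -- need NC (iv headX₂) (iv lastM), from junction in x.toWord = M ++ invRev X₁
    have hj := junction_of_red' hxred _ (by rw [hMl]; rfl) _ (by rw [hX2h]; rfl)
    -- hj : NC (M.getLast) (headX₂) i.e. headX₂ ≠ iv lastM
    intro hcon
    exact hj (by
      have h9 := iv_injective hcon
      rw [h9, iv_iv])
  -- final inequalities
  by_cases hf1 : (x' * y'⁻¹).toWord.length < x'.toWord.length
  · left
    have hid : (x'*y'⁻¹) * y' * (x'*y'⁻¹)⁻¹ * y'⁻¹ = ((mk M)⁻¹*σ*(mk M)) * ((mk M)⁻¹*σ*(mk M)) := by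
      have h0 : (x'*y'⁻¹) * y' * (x'*y'⁻¹)⁻¹ * y'⁻¹ = x'*y'*x'⁻¹*y'⁻¹ := by group
      rw [h0]; exact hsq'
    have hlt : (x'*y'⁻¹).toWord.length + y'.toWord.length < n := by omega
    have hcm := ct4 (IH _ hlt (x'*y'⁻¹) y' _ rfl hid)
    rw [e1', e2'] at hcm
    exact ct_conj hcm
  by_cases hf2 : (x' * y'⁻¹).toWord.length < y'.toWord.length
  · left
    have hyx : y' * x'⁻¹ = (x' * y'⁻¹)⁻¹ := by group
    have hid : x' * (y'*x'⁻¹) * x'⁻¹ * (y'*x'⁻¹)⁻¹ = ((mk M)⁻¹*σ*(mk M)) * ((mk M)⁻¹*σ*(mk M)) := by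
      have h0 : x' * (y'*x'⁻¹) * x'⁻¹ * (y'*x'⁻¹)⁻¹ = x'*y'*x'⁻¹*y'⁻¹ := by group
      rw [h0]; exact hsq'
    have hlen' : (y'*x'⁻¹).toWord.length = (x'*y'⁻¹).toWord.length := by
      rw [hyx, len_inv]
    have hlt : x'.toWord.length + (y'*x'⁻¹).toWord.length < n := by omega
    have hcm := ct5 (IH _ hlt x' (y'*x'⁻¹) _ rfl hid)
    rw [e1', e2'] at hcm
    exact ct_conj hcm
  push_neg at hf1 hf2
  exact absurd hsq' (by
    intro hss
    exact final_branch x' y' ((mk M)⁻¹*σ*(mk M)) hx'1 hy'1 H1 H2 H3 hf1 hf2 hss)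

end LyndonAux
namespace LyndonAux
open FreeGroup List
set_option linter.unusedSectionVars false
variable {α : Type*} [DecidableEq α]

lemma comm_sq : ∀ (n : ℕ) (p q s : FreeGroup α), p.toWord.length + q.toWord.length = n →
    p * q * p⁻¹ * q⁻¹ = s * s → Commute p q := by
  intro n
  induction n using Nat.strong_induction_on with
  | _ n IH =>
    intro p q s hn hsq
    by_cases hp : p = 1
    · subst hp; exact Commute.one_left q
    by_cases hq : q = 1
    · subst hq; exact Commute.one_right p
    rcases run n (fun m hm => IH m hm) p q s hn hp hq hsq with hc | h3
    · exact hc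
    have hsq2 : p * q⁻¹ * p⁻¹ * (q⁻¹)⁻¹ = (q⁻¹*s⁻¹*q) * (q⁻¹*s⁻¹*q) := by
      have h0 : p * q⁻¹ * p⁻¹ * (q⁻¹)⁻¹ = q⁻¹*(p*q*p⁻¹*q⁻¹)⁻¹*q := by group
      rw [h0, hsq]; group
    have hn2 : p.toWord.length + (q⁻¹).toWord.length = n := by rw [len_inv]; exact hn
    rcases run n (fun m hm => IH m hm) p q⁻¹ (q⁻¹*s⁻¹*q) hn2 hp (inv_ne_one.2 hq) hsq2
      with hc | h2
    · exact ct6 hc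
    have hsq3 : p⁻¹ * q * (p⁻¹)⁻¹ * q⁻¹ = (p⁻¹*s⁻¹*p) * (p⁻¹*s⁻¹*p) := by
      have h0 : p⁻¹ * q * (p⁻¹)⁻¹ * q⁻¹ = p⁻¹*(p*q*p⁻¹*q⁻¹)⁻¹*p := by group
      rw [h0, hsq]; group
    have hn3 : (p⁻¹).toWord.length + q.toWord.length = n := by rw [len_inv]; exact hn
    rcases run n (fun m hm => IH m hm) p⁻¹ q (p⁻¹*s⁻¹*p) hn3 (inv_ne_one.2 hp) hq hsq3
      with hc | h1
    · exact ct7 hc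
    rw [toWord_inv, invRev_invRev] at h1
    rw [toWord_inv] at h2
    by_cases hf1 : (p * q⁻¹).toWord.length < p.toWord.length
    · have hid : (p*q⁻¹) * q * (p*q⁻¹)⁻¹ * q⁻¹ = s*s := by
        have h0 : (p*q⁻¹) * q * (p*q⁻¹)⁻¹ * q⁻¹ = p*q*p⁻¹*q⁻¹ := by group
        rw [h0, hsq]
      exact ct4 (IH _ (by omega) (p*q⁻¹) q s rfl hid)
    by_cases hf2 : (p * q⁻¹).toWord.length < q.toWord.length
    · have hyx : q * p⁻¹ = (p * q⁻¹)⁻¹ := by group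
      have hid : p * (q*p⁻¹) * p⁻¹ * (q*p⁻¹)⁻¹ = s*s := by
        have h0 : p * (q*p⁻¹) * p⁻¹ * (q*p⁻¹)⁻¹ = p*q*p⁻¹*q⁻¹ := by group
        rw [h0, hsq]
      have hlen' : (q*p⁻¹).toWord.length = (p*q⁻¹).toWord.length := by rw [hyx, len_inv]
      exact ct5 (IH _ (by omega) p (q*p⁻¹) s rfl hid)
    push_neg at hf1 hf2
    exact (final_branch p q s hp hq h1 h2 h3 hf1 hf2 hsq).elim

lemma comm_sq' (p q s : FreeGroup α) (hsq : p * q * p⁻¹ * q⁻¹ = s * s) : Commute p q :=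
  comm_sq _ p q s rfl hsq

end LyndonAux

/-- Lyndon's theorem: in a free group, if `x² y² z² = 1` then `x, y, z`
pairwise commute. -/
theorem lyndon_sq_sq_sq {α : Type*} (x y z : FreeGroup α)
    (h : x ^ 2 * y ^ 2 * z ^ 2 = 1) :
    Commute x y ∧ Commute x z ∧ Commute y z := by
  classical
  have hmul : x*(x*(y*(y*(z*z)))) = 1 := by
    rw [← h, pow_two, pow_two, pow_two]; group
  have key : ((x*y*z)⁻¹*z) * (z⁻¹*z⁻¹*y⁻¹*z) * ((x*y*z)⁻¹*z)⁻¹ * (z⁻¹*z⁻¹*y⁻¹*z)⁻¹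
      = (x*y*z)⁻¹ * (x*y*z)⁻¹ := by
    calc ((x*y*z)⁻¹*z) * (z⁻¹*z⁻¹*y⁻¹*z) * ((x*y*z)⁻¹*z)⁻¹ * (z⁻¹*z⁻¹*y⁻¹*z)⁻¹
        = (x*y*z)⁻¹*((x*y*z)⁻¹*(x*(x*(y*(y*(z*z)))))) := by
          group
          rw [zpow_two, ← mul_assoc]
    _ = (x*y*z)⁻¹ * (x*y*z)⁻¹ := by rw [hmul]; group
  have hc : Commute ((x*y*z)⁻¹*z) (z⁻¹*z⁻¹*y⁻¹*z) :=
    LyndonAux.comm_sq' _ _ ((x*y*z)⁻¹) key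
  have hone : (x*y*z)⁻¹ * (x*y*z)⁻¹ = 1 := by
    rw [← key]
    rw [commute_iff_eq] at hc
    rw [hc]; group
  have hxyz : x*y*z = 1 := by
    by_contra hne
    exact LyndonAux.sq_ne_one _ (inv_ne_one.2 hne) hone
  have hpz : (x*y*z)⁻¹*z = z := by rw [hxyz, inv_one, one_mul]
  rw [hpz] at hc
  have hzy : Commute z y := by
    have hy' : y = z*(z⁻¹*z⁻¹*y⁻¹*z)⁻¹*z⁻¹*z⁻¹ := by group
    rw [hy']
    exact (((Commute.refl z).mul_right hc.inv_right).mul_right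
      (Commute.refl z).inv_right).mul_right (Commute.refl z).inv_right
  have hx2 : x = z⁻¹ * y⁻¹ := by
    have h0 : x * (y*z) = 1 := by rw [← mul_assoc]; exact hxyz
    have h1 : x = (y*z)⁻¹ := eq_inv_of_mul_eq_one_left h0
    rw [h1, mul_inv_rev]
  refine ⟨?_, ?_, hzy.symm⟩
  · rw [hx2]
    exact Commute.mul_left hzy.inv_left ((Commute.refl y).inv_left)
  · rw [hx2]
    exact Commute.mul_left ((Commute.refl z).inv_left) (hzy.symm.inv_left)
end

section
/- In the group G = ⟨x, y, z | x²y²z² = 1⟩ (genus-3 non-orientable surface group), the images of the generators x, y, z do not pairwise commute; in particular [x, y] ≠ 1 in G. -/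
/-- The single relator `x² y² z²` of the genus-3 non-orientable surface group. -/
def surfaceRels : Set (FreeGroup (Fin 3)) :=
  {FreeGroup.of 0 ^ 2 * FreeGroup.of 1 ^ 2 * FreeGroup.of 2 ^ 2}

/-- The genus-3 non-orientable surface group `⟨x, y, z ∣ x²y²z² = 1⟩`. -/
abbrev SurfaceGroup : Type := PresentedGroup surfaceRels

open scoped commutatorElement

lemma aux_not_commute (f : Fin 3 → Equiv.Perm (Fin 3))
    (hrel : (f 0) ^ 2 * (f 1) ^ 2 * (f 2) ^ 2 = 1) (i j : Fin 3)
    (hij : ¬ Commute (f i) (f j)) :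
    ¬ Commute (PresentedGroup.of (rels := surfaceRels) i)
      (PresentedGroup.of (rels := surfaceRels) j) := by
  have h : ∀ r ∈ surfaceRels, FreeGroup.lift f r = 1 := by
    intro r hr
    rcases hr with rfl
    simpa using hrel
  intro hc
  apply hij
  have := congrArg (PresentedGroup.toGroup h) hc.eq
  exact (by simpa [map_mul, PresentedGroup.toGroup.of] using this : f i * f j = f j * f i)

/-- In `G = ⟨x, y, z ∣ x²y²z² = 1⟩` the images of the generators do not pairwise
commute; in particular `[x, y] ≠ 1` in `G`. -/
theorem surfaceGroup_generators_not_commute :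
    (¬ Commute (PresentedGroup.of (rels := surfaceRels) 0)
        (PresentedGroup.of (rels := surfaceRels) 1)) ∧
    (¬ Commute (PresentedGroup.of (rels := surfaceRels) 0)
        (PresentedGroup.of (rels := surfaceRels) 2)) ∧
    (¬ Commute (PresentedGroup.of (rels := surfaceRels) 1)
        (PresentedGroup.of (rels := surfaceRels) 2)) ∧
    ⁅(PresentedGroup.of (rels := surfaceRels) 0 : SurfaceGroup),
      PresentedGroup.of (rels := surfaceRels) 1⁆ ≠ 1 := by
  have h01 : ¬ Commute (PresentedGroup.of (rels := surfaceRels) 0)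
      (PresentedGroup.of (rels := surfaceRels) 1) := by
    apply aux_not_commute ![Equiv.swap 0 1, Equiv.swap 0 2, 1]
    · decide
    · intro h; exact absurd h.eq (by decide)
  have h02 : ¬ Commute (PresentedGroup.of (rels := surfaceRels) 0)
      (PresentedGroup.of (rels := surfaceRels) 2) := by
    apply aux_not_commute ![Equiv.swap 0 1, 1, Equiv.swap 0 2]
    · decide
    · intro h; exact absurd h.eq (by decide)
  have h12 : ¬ Commute (PresentedGroup.of (rels := surfaceRels) 1)
      (PresentedGroup.of (rels := surfaceRels) 2) := by
    apply aux_not_commute ![1, Equiv.swap 0 1, Equiv.swap 0 2]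
    · decide
    · intro h; exact absurd h.eq (by decide)
  refine ⟨h01, h02, h12, ?_⟩
  rw [Ne, commutatorElement_eq_one_iff_commute]
  exact h01
end

section
/- The group G = ⟨x, y, z | x²y²z² = 1⟩ is not fully residually free: there exist nontrivial elements g, h ∈ G (namely g = [x,y]) such that every homomorphism from G to a free group kills g, i.e., for every free group F and every homomorphism φ : G → F, φ([x,y]) = 1. -/
open scoped commutatorElement

open Multiplicative

variable {K : Type} [Group K]

/-- The central extension of `K` by `ZMod 2` with 2-cocycle `(g,h) ↦ α g * β h`. -/
@[ext]
structure CupExt (α β : K →* Multiplicative (ZMod 2)) : Type where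
  a : ZMod 2
  g : K

namespace CupExt

variable {α β : K →* Multiplicative (ZMod 2)}

instance : Mul (CupExt α β) :=
  ⟨fun x y => ⟨x.a + y.a + (α x.g).toAdd * (β y.g).toAdd, x.g * y.g⟩⟩
instance : One (CupExt α β) := ⟨⟨0, 1⟩⟩
instance : Inv (CupExt α β) :=
  ⟨fun x => ⟨x.a + (α x.g).toAdd * (β x.g).toAdd, x.g⁻¹⟩⟩

@[simp] lemma a_mul (x y : CupExt α β) :
    (x * y).a = x.a + y.a + (α x.g).toAdd * (β y.g).toAdd := rfl
@[simp] lemma g_mul (x y : CupExt α β) : (x * y).g = x.g * y.g := rfl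
@[simp] lemma a_one : (1 : CupExt α β).a = 0 := rfl
@[simp] lemma g_one : (1 : CupExt α β).g = 1 := rfl
@[simp] lemma a_inv (x : CupExt α β) :
    x⁻¹.a = x.a + (α x.g).toAdd * (β x.g).toAdd := rfl
@[simp] lemma g_inv (x : CupExt α β) : x⁻¹.g = x.g⁻¹ := rfl

private lemma z2 : ∀ t : ZMod 2, t + t = 0 := by decide
private lemma z2' : ∀ t : ZMod 2, -t = t := by decide

instance : Group (CupExt α β) where
  mul_assoc x y z := by
    ext
    · simp only [a_mul, g_mul, map_mul, toAdd_mul]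
      ring
    · simp [mul_assoc]
  one_mul x := by ext <;> simp
  mul_one x := by ext <;> simp
  inv_mul_cancel x := by
    ext
    · simp only [a_mul, a_inv, g_inv, map_inv, toAdd_inv, z2', a_one]
      rw [show x.a + (α x.g).toAdd * (β x.g).toAdd + x.a
            + (α x.g).toAdd * (β x.g).toAdd =
          (x.a + x.a) + ((α x.g).toAdd * (β x.g).toAdd
            + (α x.g).toAdd * (β x.g).toAdd) by ring, z2, z2, add_zero]
    · simp

/-- Projection to `K`. -/
def proj (α β : K →* Multiplicative (ZMod 2)) : CupExt α β →* K where
  toFun x := x.g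
  map_one' := rfl
  map_mul' _ _ := rfl

@[simp] lemma proj_apply (x : CupExt α β) : proj α β x = x.g := rfl

end CupExt

/-- On a free group, the cocycle `(g,h) ↦ α g * β h` splits. -/
lemma exists_cocycle_split (K : Type) [Group K] [IsFreeGroup K]
    (α β : K →* Multiplicative (ZMod 2)) :
    ∃ f : K → ZMod 2,
      ∀ g h : K, f (g * h) = f g + f h + (α g).toAdd * (β h).toAdd := by
  let σ : K →* CupExt α β :=
    IsFreeGroup.lift (fun s => CupExt.mk 0 (IsFreeGroup.of s))
  have hp : ∀ g : K, (σ g).g = g := by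
    have h : (CupExt.proj α β).comp σ = MonoidHom.id K :=
      IsFreeGroup.ext_hom (fun s => by
        rw [MonoidHom.comp_apply, MonoidHom.id_apply,
          show σ (IsFreeGroup.of s) = CupExt.mk 0 (IsFreeGroup.of s) from
            IsFreeGroup.lift_of _ _, CupExt.proj_apply])
    intro g
    exact DFunLike.congr_fun h g
  refine ⟨fun g => (σ g).a, fun g h => ?_⟩
  have hm : σ (g * h) = σ g * σ h := σ.map_mul g h
  have h2 := congrArg CupExt.a hm
  rw [CupExt.a_mul, hp, hp] at h2
  exact h2

/-- Evaluating a split cocycle on the relation `x² y² z² = 1`. -/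
lemma isotropy {G : Type*} [Group G] {x y z : G} (hrel : x ^ 2 * y ^ 2 * z ^ 2 = 1)
    (α β : G →* Multiplicative (ZMod 2)) (f : G → ZMod 2)
    (hf : ∀ g h : G, f (g * h) = f g + f h + (α g).toAdd * (β h).toAdd) :
    (α x).toAdd * (β x).toAdd + (α y).toAdd * (β y).toAdd
      + (α z).toAdd * (β z).toAdd = 0 := by
  have z2 : ∀ t : ZMod 2, t + t = 0 := by decide
  have f1 : f 1 = 0 := by
    have := hf 1 1
    simp only [mul_one, map_one, toAdd_one, zero_mul, add_zero] at this
    rw [z2 (f 1)] at this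
    exact this
  have hx : f (x * x) = (α x).toAdd * (β x).toAdd := by
    rw [hf x x, show f x + f x + (α x).toAdd * (β x).toAdd
        = (α x).toAdd * (β x).toAdd + (f x + f x) by ring, z2, add_zero]
  have hy : f (y * y) = (α y).toAdd * (β y).toAdd := by
    rw [hf y y, show f y + f y + (α y).toAdd * (β y).toAdd
        = (α y).toAdd * (β y).toAdd + (f y + f y) by ring, z2, add_zero]
  have hz : f (z * z) = (α z).toAdd * (β z).toAdd := by
    rw [hf z z, show f z + f z + (α z).toAdd * (β z).toAdd
        = (α z).toAdd * (β z).toAdd + (f z + f z) by ring, z2, add_zero]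
  have hsq : ∀ g : G, (α (g * g)).toAdd = 0 := fun g => by
    rw [map_mul, toAdd_mul, z2]
  have hyz : f (y * y * (z * z)) = (α y).toAdd * (β y).toAdd
      + (α z).toAdd * (β z).toAdd := by
    rw [hf (y * y) (z * z), hy, hz, hsq, zero_mul, add_zero]
  have hxyz : f (x * x * (y * y * (z * z)))
      = (α x).toAdd * (β x).toAdd + ((α y).toAdd * (β y).toAdd
        + (α z).toAdd * (β z).toAdd) := by
    rw [hf (x * x) (y * y * (z * z)), hx, hyz, hsq, zero_mul, add_zero]
  have hrel' : x * x * (y * y * (z * z)) = 1 := by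
    rw [← hrel]; rw [pow_two, pow_two, pow_two]; group
  rw [hrel', f1] at hxyz
  rw [add_assoc]
  exact hxyz.symm

/-- A free group on a subsingleton type is commutative. -/
lemma freeGroup_commute {ι : Type*} [Subsingleton ι] (u v : FreeGroup ι) :
    Commute u v := by
  induction u using FreeGroup.induction_on with
  | C1 => exact Commute.one_left v
  | of i =>
      induction v using FreeGroup.induction_on with
      | C1 => exact Commute.one_right _
      | of j => rw [Subsingleton.elim i j]
      | inv_of j h => exact h.inv_right
      | mul a b ha hb => exact ha.mul_right hb
  | inv_of i h => exact h.inv_left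
  | mul a b ha hb => exact ha.mul_left hb

/-- The relator holds in the surface group. -/
lemma surface_relator :
    (PresentedGroup.of (rels := surfaceRels) 0) ^ 2
      * (PresentedGroup.of (rels := surfaceRels) 1) ^ 2
      * (PresentedGroup.of (rels := surfaceRels) 2) ^ 2 = 1 := by
  have h : PresentedGroup.mk surfaceRels
      (FreeGroup.of 0 ^ 2 * FreeGroup.of 1 ^ 2 * FreeGroup.of 2 ^ 2) = 1 := by
    refine (QuotientGroup.eq_one_iff _).mpr ?_
    exact Subgroup.subset_normalClosure (by simp [surfaceRels])
  simp only [map_mul, map_pow] at h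
  exact h

private lemma no_isotropic_plane : ∀ u v : ZMod 2 × ZMod 2 × ZMod 2,
    ¬(u ≠ (0, 0, 0) ∧ v ≠ (0, 0, 0) ∧ u ≠ v ∧
      u.1 * u.1 + u.2.1 * u.2.1 + u.2.2 * u.2.2 = 0 ∧
      u.1 * v.1 + u.2.1 * v.2.1 + u.2.2 * v.2.2 = 0 ∧
      v.1 * v.1 + v.2.1 * v.2.1 + v.2.2 * v.2.2 = 0) := by decide

open Multiplicative in
/-- Lyndon-type theorem: any homomorphism from the surface group to a free
group sends the first two generators to commuting elements. -/
lemma commute_of_hom {β : Type} (φ : SurfaceGroup →* FreeGroup β) :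
    Commute (φ (PresentedGroup.of 0)) (φ (PresentedGroup.of 1)) := by
  classical
  set X : SurfaceGroup := PresentedGroup.of (rels := surfaceRels) 0 with hX
  set Y : SurfaceGroup := PresentedGroup.of (rels := surfaceRels) 1 with hY
  set Z : SurfaceGroup := PresentedGroup.of (rels := surfaceRels) 2 with hZ
  by_contra hc
  set H : Subgroup (FreeGroup β) := φ.range with hH
  set ψ : SurfaceGroup →* H := φ.rangeRestrict with hψ
  have hψs : Function.Surjective ψ := φ.rangeRestrict_surjective
  have hcoe : ∀ g : SurfaceGroup, ((ψ g : H) : FreeGroup β) = φ g :=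
    fun g => rfl
  -- a commutation in `H` yields the desired commutation
  have hcomm : ¬ Commute (ψ X) (ψ Y) := by
    intro h
    apply hc
    have h2 := congrArg (fun t : H => (t : FreeGroup β)) h.eq
    exact (by simpa only [Subgroup.coe_mul, hcoe] using h2 : φ X * φ Y = φ Y * φ X)
  -- two distinct generators of the free group `H`
  obtain ⟨i, j, hij⟩ : ∃ i j : IsFreeGroup.Generators H, i ≠ j := by
    by_contra h
    push_neg at h
    haveI : Subsingleton (IsFreeGroup.Generators H) := ⟨h⟩
    apply hcomm
    have hfg := freeGroup_commute (IsFreeGroup.toFreeGroup H (ψ X))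
      (IsFreeGroup.toFreeGroup H (ψ Y))
    have h2 : IsFreeGroup.toFreeGroup H (ψ X * ψ Y)
        = IsFreeGroup.toFreeGroup H (ψ Y * ψ X) := by
      rw [map_mul, map_mul]; exact hfg.eq
    exact (IsFreeGroup.toFreeGroup H).injective h2
  -- the two characters
  let χ : IsFreeGroup.Generators H → (H →* Multiplicative (ZMod 2)) :=
    fun k => IsFreeGroup.lift (fun s => if s = k then ofAdd (1 : ZMod 2) else 1)
  have hχof : ∀ k s, χ k (IsFreeGroup.of s)
      = if s = k then ofAdd (1 : ZMod 2) else 1 :=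
    fun k s => IsFreeGroup.lift_of _ _
  -- value vectors
  let vec : (H →* Multiplicative (ZMod 2)) → ZMod 2 × ZMod 2 × ZMod 2 :=
    fun χ' => ((χ' (ψ X)).toAdd, (χ' (ψ Y)).toAdd, (χ' (ψ Z)).toAdd)
  have hinj : ∀ χ₁ χ₂ : H →* Multiplicative (ZMod 2),
      vec χ₁ = vec χ₂ → χ₁ = χ₂ := by
    intro χ₁ χ₂ hvec
    have h1 : (χ₁ (ψ X)) = (χ₂ (ψ X)) :=
      Multiplicative.toAdd.injective (congrArg Prod.fst hvec)
    have h2 : (χ₁ (ψ Y)) = (χ₂ (ψ Y)) :=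
      Multiplicative.toAdd.injective (congrArg (fun t => t.2.1) hvec)
    have h3 : (χ₁ (ψ Z)) = (χ₂ (ψ Z)) :=
      Multiplicative.toAdd.injective (congrArg (fun t => t.2.2) hvec)
    have hcomp : χ₁.comp ψ = χ₂.comp ψ := by
      refine PresentedGroup.ext fun k => ?_
      fin_cases k
      · exact h1
      · exact h2
      · exact h3
    refine MonoidHom.ext fun h => ?_
    obtain ⟨g, rfl⟩ := hψs h
    exact DFunLike.congr_fun hcomp g
  have hvone : vec 1 = (0, 0, 0) := by
    simp [vec]
  -- nonzero and distinct
  have hne1 : ∀ k, χ k ≠ 1 := by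
    intro k hk
    have := hχof k k
    rw [hk, if_pos rfl] at this
    simp only [MonoidHom.one_apply] at this
    have := congrArg Multiplicative.toAdd this
    simp at this
  have hnz : ∀ k, vec (χ k) ≠ (0, 0, 0) := by
    intro k hk
    exact hne1 k (hinj _ _ (hk.trans hvone.symm))
  have hvij : vec (χ i) ≠ vec (χ j) := by
    intro hk
    have hij2 := hinj _ _ hk
    have e1 := hχof i i
    rw [hij2, hχof j i, if_pos rfl, if_neg hij] at e1
    have := congrArg Multiplicative.toAdd e1
    simp at this
  -- isotropy of the value vectors
  have hdot : ∀ χ₁ χ₂ : H →* Multiplicative (ZMod 2),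
      (vec χ₁).1 * (vec χ₂).1 + (vec χ₁).2.1 * (vec χ₂).2.1
        + (vec χ₁).2.2 * (vec χ₂).2.2 = 0 := by
    intro χ₁ χ₂
    obtain ⟨f, hf⟩ := exists_cocycle_split H χ₁ χ₂
    have hf' : ∀ g h : SurfaceGroup, (f ∘ ψ) (g * h)
        = (f ∘ ψ) g + (f ∘ ψ) h
          + ((χ₁.comp ψ) g).toAdd * ((χ₂.comp ψ) h).toAdd := by
      intro g h
      simp only [Function.comp_apply, map_mul, MonoidHom.comp_apply]
      exact hf _ _
    exact isotropy surface_relator (χ₁.comp ψ) (χ₂.comp ψ) (f ∘ ψ) hf'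
  exact no_isotropic_plane (vec (χ i)) (vec (χ j))
    ⟨hnz i, hnz j, hvij, hdot (χ i) (χ i), hdot (χ i) (χ j), hdot (χ j) (χ j)⟩

/-- The commutator of the first two generators is nontrivial, as witnessed in `S₃`. -/
lemma commutator_ne_one :
    ⁅PresentedGroup.of (rels := surfaceRels) 0,
      PresentedGroup.of (rels := surfaceRels) 1⁆ ≠ (1 : SurfaceGroup) := by
  have hrels : ∀ r ∈ surfaceRels,
      FreeGroup.lift (![Equiv.swap 0 1, Equiv.swap 0 2, 1] :
        Fin 3 → Equiv.Perm (Fin 3)) r = 1 := by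
    intro r hr
    have : r = FreeGroup.of 0 ^ 2 * FreeGroup.of 1 ^ 2 * FreeGroup.of 2 ^ 2 := hr
    subst this
    simp only [map_mul, map_pow, FreeGroup.lift_apply_of]
    decide
  intro h
  have h2 := congrArg (PresentedGroup.toGroup hrels) h
  rw [map_commutatorElement, map_one, PresentedGroup.toGroup.of,
    PresentedGroup.toGroup.of] at h2
  revert h2
  decide

/-- `G = ⟨x, y, z ∣ x²y²z² = 1⟩` is not fully residually free: the nontrivial
element `g = [x, y]` is killed by every homomorphism from `G` to a free group. -/
theorem surfaceGroup_not_fully_residually_free :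
    ∃ g : SurfaceGroup,
      g = ⁅PresentedGroup.of (rels := surfaceRels) 0,
            PresentedGroup.of (rels := surfaceRels) 1⁆ ∧
      g ≠ 1 ∧
      ∀ (β : Type) (φ : SurfaceGroup →* FreeGroup β), φ g = 1 := by
  refine ⟨_, rfl, commutator_ne_one, fun β φ => ?_⟩
  rw [map_commutatorElement]
  exact commutatorElement_eq_one_iff_commute.mpr (commute_of_hom φ)
end
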